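/- arXiv:1306.6265 — 2 statements merged into one kernel-verified Lean document; each statement's English description precedes it below -/
import Mathlib

section
/- Every constant-weight linear code is minimal: if C is a linear code of length n over F_q and there is a natural number w > 0 such that every nonzero codeword of C has Hamming weight exactly w, then every nonzero codeword of C is minimal, i.e., for nonzero c, c' ∈ C with supp(c') ⊆ supp(c), the codeword c' is a scalar multiple of c. -/
/-!
If `supp c' ⊆ supp c` and `c i ≠ 0`, then `c' - (c' i / c i) • c` is a codeword supported in
`supp c` minus `i`, so its weight is smaller than that of `c`. When `c` has minimum weight among
the nonzero codewords, that difference must vanish, i.e. `c'` is a multiple of `c`. In a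
constant-weight code every nonzero codeword has minimum weight.
-/

/-- The support of a vector, as a finset of coordinates. -/
def supp {n : ℕ} {F : Type} [Field F] [DecidableEq F] (c : Fin n → F) : Finset (Fin n) :=
  Finset.univ.filter (fun i => c i ≠ 0)

section

variable {n : ℕ} {F : Type} [Field F] [DecidableEq F]

lemma mem_supp (c : Fin n → F) (i : Fin n) : i ∈ supp c ↔ c i ≠ 0 := by
  simp [supp]

lemma supp_nonempty_of_ne_zero {c : Fin n → F} (hc : c ≠ 0) : (supp c).Nonempty := by
  obtain ⟨i, hi⟩ := Function.ne_iff.mp hc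
  exact ⟨i, (mem_supp c i).mpr hi⟩

lemma supp_sub_smul_subset_erase {c c' : Fin n → F} (hsub : supp c' ⊆ supp c) {i : Fin n}
    (hi : c i ≠ 0) : supp (c' - (c' i / c i) • c) ⊆ (supp c).erase i := by
  intro j hj
  rw [mem_supp] at hj
  refine Finset.mem_erase.mpr ⟨?_, ?_⟩
  · rintro rfl
    exact hj (by simp [div_mul_cancel₀ _ hi])
  · by_contra hjc
    have hcj : c j = 0 := by simpa [mem_supp] using hjc
    have hc'j : c' j = 0 := by simpa [mem_supp] using mt (@hsub j) hjc
    exact hj (by simp [hcj, hc'j])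

theorem eq_smul_of_supp_subset_of_min_weight (C : Submodule F (Fin n → F))
    {c c' : Fin n → F} (hc : c ∈ C) (hc0 : c ≠ 0)
    (hmin : ∀ d ∈ C, d ≠ 0 → (supp c).card ≤ (supp d).card)
    (hc' : c' ∈ C) (hsub : supp c' ⊆ supp c) : ∃ lam : F, c' = lam • c := by
  obtain ⟨i, hi⟩ := supp_nonempty_of_ne_zero hc0
  have hci : c i ≠ 0 := (mem_supp c i).mp hi
  refine ⟨c' i / c i, sub_eq_zero.mp ?_⟩
  by_contra hd0
  have hdC : c' - (c' i / c i) • c ∈ C := C.sub_mem hc' (C.smul_mem _ hc)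
  have hlt : (supp (c' - (c' i / c i) • c)).card < (supp c).card :=
    (Finset.card_le_card (supp_sub_smul_subset_erase hsub hci)).trans_lt
      (Finset.card_erase_lt_of_mem hi)
  exact (hmin _ hdC hd0).not_gt hlt

end

theorem constant_weight_code_is_minimal_general {n w : ℕ} {F : Type} [Field F]
    [DecidableEq F]
    (C : Submodule F (Fin n → F))
    (hconst : ∀ c ∈ C, c ≠ 0 → (supp c).card = w) :
    ∀ c ∈ C, c ≠ 0 → ∀ c' ∈ C, c' ≠ 0 → supp c' ⊆ supp c → ∃ lam : F, c' = lam • c := by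
  intro c hc hc0 c' hc' _ hsub
  refine eq_smul_of_supp_subset_of_min_weight C hc hc0 (fun d hd hd0 => ?_) hc' hsub
  rw [hconst c hc hc0, hconst d hd hd0]

/-- Every constant-weight linear code is minimal: if every nonzero codeword of `C` has
Hamming weight exactly `w > 0`, then every nonzero codeword of `C` is minimal. -/
theorem constant_weight_code_is_minimal {n w : ℕ} {F : Type} [Field F] [Fintype F]
    [DecidableEq F]
    (C : Submodule F (Fin n → F)) (hw : 0 < w)
    (hconst : ∀ c ∈ C, c ≠ 0 → (supp c).card = w) :
    ∀ c ∈ C, c ≠ 0 → ∀ c' ∈ C, c' ≠ 0 → supp c' ⊆ supp c → ∃ lam : F, c' = lam • c :=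
  constant_weight_code_is_minimal_general C hconst
end

section
/- (Maximal bound, rate form) If C is a minimal linear code of length n ≥ 1 and dimension k over F_q, then q^{k−1} ≤ 2^{n−1}. (In particular the rate k/n is asymptotically at most log_q 2.) -/
/-!
Scaling does not change supports, so the support is a function on the projective space `ℙ F C`;
minimality makes it injective with image an antichain of subsets of `Fin n`. Sperner's theorem
bounds the number of points of `ℙ F C`, which is at least `q^(k-1)`, by the central binomial
coefficient `n.choose (n / 2) ≤ 2^(n-1)`.
-/

open scoped LinearAlgebra.Projectivization

section Code

variable {n : ℕ} {F : Type} [Field F] [DecidableEq F]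

theorem supp_smul_of_ne_zero {a : F} (ha : a ≠ 0) (c : Fin n → F) : supp (a • c) = supp c := by
  ext i
  simp [supp, ha]

def IsMinimalCode (C : Submodule F (Fin n → F)) : Prop :=
  ∀ c ∈ C, c ≠ 0 → ∀ c' ∈ C, supp c' ⊆ supp c → ∃ lam : F, c' = lam • c

def projSupp (C : Submodule F (Fin n → F)) : ℙ F C → Finset (Fin n) :=
  Projectivization.lift (fun c => supp (c.1 : Fin n → F)) fun c c' t h => by
    have ht : t ≠ 0 := by
      rintro rfl
      exact c.2 (by simpa using h)
    rw [h, Submodule.coe_smul, supp_smul_of_ne_zero ht]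

theorem IsMinimalCode.eq_of_projSupp_subset {C : Submodule F (Fin n → F)} (hC : IsMinimalCode C)
    {p p' : ℙ F C} (h : projSupp C p ⊆ projSupp C p') : p = p' := by
  induction p using Projectivization.ind with | h c hc => ?_
  induction p' using Projectivization.ind with | h c' hc' => ?_
  obtain ⟨t, ht⟩ := hC c' c'.2 (by simpa using hc') c c.2 h
  exact (Projectivization.mk_eq_mk_iff' F c c' hc hc').2 ⟨t, Subtype.ext ht.symm⟩

end Code

theorem card_le_choose_half_of_subset_imp_eq {α β : Type*} [Finite α] [Fintype β]
    [DecidableEq β] (f : α → Finset β) (hf : ∀ a b, f a ⊆ f b → a = b) :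
    Nat.card α ≤ (Fintype.card β).choose (Fintype.card β / 2) := by
  have := Fintype.ofFinite α
  have hinj : Function.Injective f := fun a b h => hf a b h.subset
  rw [Nat.card_eq_fintype_card, ← Finset.card_univ, ← Finset.card_image_of_injective _ hinj]
  refine IsAntichain.sperner ?_
  rw [Finset.coe_image, Finset.coe_univ, Set.image_univ]
  rintro _ ⟨a, rfl⟩ _ ⟨b, rfl⟩ hne hab
  exact hne (congrArg f (hf a b hab))

theorem Nat.choose_half_le_two_pow_pred (n : ℕ) : n.choose (n / 2) ≤ 2 ^ (n - 1) := by
  cases n with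
  | zero => simp
  | succ m => exact Nat.choose_succ_le_two_pow m _

theorem Projectivization.pow_le_card_of_finrank_eq_succ {K V : Type*} [DivisionRing K] [Finite K]
    [AddCommGroup V] [Module K V] {k : ℕ} (h : Module.finrank K V = k + 1) :
    Nat.card K ^ k ≤ Nat.card (ℙ K V) := by
  rw [Projectivization.card_of_finrank K V h, Finset.sum_range_succ]
  exact Nat.le_add_left _ _

theorem minimal_code_rate_bound_general {n k : ℕ} {F : Type} [Field F] [Fintype F] [DecidableEq F]
    (C : Submodule F (Fin n → F)) (hk : Module.finrank F C = k)
    (hmin : ∀ c ∈ C, c ≠ 0 → ∀ c' ∈ C, supp c' ⊆ supp c → ∃ lam : F, c' = lam • c) :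
    Fintype.card F ^ (k - 1) ≤ 2 ^ (n - 1) := by
  rcases k with _ | k
  · exact Nat.one_le_two_pow
  calc Fintype.card F ^ (k + 1 - 1) = Nat.card F ^ k := by simp
    _ ≤ Nat.card (ℙ F C) := Projectivization.pow_le_card_of_finrank_eq_succ hk
    _ ≤ n.choose (n / 2) := by
      simpa using card_le_choose_half_of_subset_imp_eq (projSupp C)
        fun _ _ => IsMinimalCode.eq_of_projSupp_subset hmin
    _ ≤ 2 ^ (n - 1) := Nat.choose_half_le_two_pow_pred n

/-- Maximal bound (rate form): a minimal linear code of length `n ≥ 1` and dimension `k`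
over `F_q` satisfies `q^(k-1) ≤ 2^(n-1)`; in particular the rate `k/n` is asymptotically
at most `log_q 2`. -/
theorem minimal_code_rate_bound {n k : ℕ} {F : Type} [Field F] [Fintype F] [DecidableEq F]
    (hn : 1 ≤ n)
    (C : Submodule F (Fin n → F)) (hk : Module.finrank F C = k)
    (hmin : ∀ c ∈ C, c ≠ 0 → ∀ c' ∈ C, supp c' ⊆ supp c → ∃ lam : F, c' = lam • c) :
    Fintype.card F ^ (k - 1) ≤ 2 ^ (n - 1) :=
  minimal_code_rate_bound_general C hk hmin
end
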